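/- Let p_{X,Y} ∈ E[0,1]^2_n be a two-dimensional histogram density of resolution n whose weights w_{k_1,k_2} = w_{k_2} depend only on the second index, let p_X ∈ E[0,1]^1_n be its first marginal (with weights w_k), and let f be the piecewise linear function of the explicit construction with f#U = p_X. Define the transport map M: [0,1] → [0,1]^2 by M(x) = (x, f(g_s(x))). Then W(M#U, p_{X,Y}) ≤ 2√2/2^s. -/

import Mathlib

/-!
Draw `(u, t)` uniformly from the unit square and let `x` be the point of the tooth of `g_s`
containing `u` at which `g_s` takes the value `t`. Then `x` is uniform on `[0, 1]` and
`M x = (x, f t)`, while `(u, f t)` has density `p_{X,Y}`: the coordinates are independent, `u` is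
uniform and `f t ∼ p_X`. The two points differ only in the first coordinate, by at most the tooth
width `2⁻ˢ`.
-/

open MeasureTheory Matrix

/-- Uniform probability measure on the interval `[a, b]`. -/
noncomputable def uniformOnIcc (a b : ℝ) : Measure ℝ :=
  (ENNReal.ofReal (b - a))⁻¹ • volume.restrict (Set.Icc a b)

/-- Wasserstein(-1) distance between two measures: the infimum of `∫ ‖x - y‖ dπ` over all
couplings `π`, i.e., measures on the product whose marginals are `μ` and `ν`. -/
noncomputable def wassersteinDist {E : Type*} [MeasurableSpace E] [NormedAddCommGroup E]
    (μ ν : Measure E) : ℝ :=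
  ⨅ π : {π : Measure (E × E) // π.map Prod.fst = μ ∧ π.map Prod.snd = ν},
    ∫ p, ‖p.1 - p.2‖ ∂(π : Measure (E × E))

/-- The sawtooth function `g`: `g x = 2 x` for `0 ≤ x < 1/2`, `g x = 2 (1 - x)` for
`1/2 ≤ x ≤ 1`, and `g x = 0` outside `[0, 1]`. -/
noncomputable def saw (x : ℝ) : ℝ :=
  if x < 0 then 0 else if x < 1/2 then 2 * x else if x ≤ 1 then 2 * (1 - x) else 0

/-- `sawIter s` is the `s`-fold composition `g_s = g ∘ g ∘ ⋯ ∘ g` of the sawtooth function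
(with `sawIter 0 = id`, `sawIter 1 = g`). -/
noncomputable def sawIter : ℕ → ℝ → ℝ
  | 0, x => x
  | s + 1, x => saw (sawIter s x)

/-- The pdf of a two-dimensional histogram distribution of resolution `n` with weights `W`:
it equals `W k₁ k₂` on the square `[k₁/n, (k₁+1)/n) × [k₂/n, (k₂+1)/n)`. -/
noncomputable def histPdf2 (n : ℕ) (W : ℕ → ℕ → ℝ) (y : EuclideanSpace ℝ (Fin 2)) : ℝ :=
  ∑ k₁ ∈ Finset.range n, ∑ k₂ ∈ Finset.range n,
    W k₁ k₂ * (Set.Ico ((k₁:ℝ)/n) (((k₁:ℝ)+1)/n)).indicator (fun _ => (1:ℝ)) (y 0)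
      * (Set.Ico ((k₂:ℝ)/n) (((k₂:ℝ)+1)/n)).indicator (fun _ => (1:ℝ)) (y 1)

/-- The explicit piecewise linear function generating the histogram distribution of
resolution `n` (uniform tile size) with weights `v` from the uniform distribution:
`f(x) = ∑_i a_i max(0, x - b_i)` with `a_0 = 1/v_0`, `a_i = 1/v_i - 1/v_{i-1}`,
`b_i = (1/n) ∑_{j<i} v_j`. -/
noncomputable def plf (n : ℕ) (v : ℕ → ℝ) (x : ℝ) : ℝ :=
  ∑ i ∈ Finset.range n,
    (if i = 0 then 1 / v 0 else 1 / v i - 1 / v (i-1)) *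
      max 0 (x - (1/(n:ℝ)) * ∑ j ∈ Finset.range i, v j)

open Set
open scoped ENNReal

local notation "𝕌" => (volume.restrict (Icc (0 : ℝ) 1) : Measure ℝ)

lemma saw_of_le_half {x : ℝ} (h₀ : 0 ≤ x) (h : x ≤ 1 / 2) : saw x = 2 * x := by
  unfold saw; split_ifs <;> linarith

lemma saw_of_half_le {x : ℝ} (h : 1 / 2 ≤ x) (h₁ : x ≤ 1) : saw x = 2 * (1 - x) := by
  unfold saw; split_ifs <;> linarith

lemma saw_one_sub {x : ℝ} (hx : x ∈ Icc (0 : ℝ) 1) : saw (1 - x) = saw x := by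
  rcases le_total x (1 / 2) with h | h
  · rw [saw_of_half_le (by linarith) (by linarith [hx.1]), saw_of_le_half hx.1 h]; ring
  · rw [saw_of_le_half (by linarith [hx.2]) (by linarith), saw_of_half_le h hx.2]

lemma measurable_saw : Measurable saw := by
  unfold saw
  exact Measurable.ite measurableSet_Iio measurable_const <|
    Measurable.ite measurableSet_Iio (by fun_prop) <|
    Measurable.ite measurableSet_Iic (by fun_prop) measurable_const

lemma measurable_sawIter (s : ℕ) : Measurable (sawIter s) := by
  induction s with
  | zero => exact measurable_id
  | succ s ih => exact measurable_saw.comp ih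

def flipOdd (j : ℕ) (t : ℝ) : ℝ := if Even j then t else 1 - t

lemma flipOdd_flipOdd (j : ℕ) (t : ℝ) : flipOdd j (flipOdd j t) = t := by
  unfold flipOdd; split_ifs <;> ring

lemma flipOdd_mem_Icc (j : ℕ) {t : ℝ} (ht : t ∈ Icc (0 : ℝ) 1) :
    flipOdd j t ∈ Icc (0 : ℝ) 1 := by
  unfold flipOdd; split_ifs
  · exact ht
  · exact ⟨by linarith [ht.2], by linarith [ht.1]⟩

lemma saw_flipOdd (j : ℕ) {t : ℝ} (ht : t ∈ Icc (0 : ℝ) 1) : saw (flipOdd j t) = saw t := by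
  unfold flipOdd; split_ifs
  · rfl
  · exact saw_one_sub ht

/- Writing `j = 2m + b`, the point `(j + t) / 2^(s+1)` is `(m + (b + t) / 2) / 2^s`; the
induction hypothesis sends it to `flipOdd m ((b + t) / 2)`, and one more tooth of `saw` undoes
the halving. -/
theorem sawIter_div_two_pow (s : ℕ) {j : ℕ} (hj : j < 2 ^ s) {t : ℝ} (ht : t ∈ Icc (0 : ℝ) 1) :
    sawIter s ((j + t) / 2 ^ s) = flipOdd j t := by
  induction s generalizing j t with
  | zero =>
    obtain rfl : j = 0 := by simpa using hj
    simp [sawIter, flipOdd]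
  | succ s ih =>
    obtain ⟨m, rfl | rfl⟩ := Nat.even_or_odd' j
    · have hr : t / 2 ∈ Icc (0 : ℝ) 1 := ⟨by linarith [ht.1], by linarith [ht.2]⟩
      have harg : ((2 * m : ℕ) + t) / 2 ^ (s + 1) = (m + t / 2) / 2 ^ s := by
        push_cast; rw [pow_succ]; field_simp
      rw [sawIter, harg, ih (by omega) hr, saw_flipOdd m hr,
        saw_of_le_half hr.1 (by linarith [ht.2]), flipOdd, if_pos (even_two_mul m)]
      ring
    · have hr : (1 + t) / 2 ∈ Icc (0 : ℝ) 1 := ⟨by linarith [ht.1], by linarith [ht.2]⟩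
      have harg : ((2 * m + 1 : ℕ) + t) / 2 ^ (s + 1) = (m + (1 + t) / 2) / 2 ^ s := by
        push_cast; rw [pow_succ]; field_simp; ring
      rw [sawIter, harg, ih (by omega) hr, saw_flipOdd m hr,
        saw_of_half_le (by linarith [ht.1]) hr.2, flipOdd,
        if_neg (Nat.not_even_two_mul_add_one m)]
      ring

noncomputable def toothIndex (N : ℕ) (u : ℝ) : ℕ := min ⌊N * u⌋₊ (N - 1)

/-- The point of the `toothIndex N u`-th tooth of `sawIter s` (for `N = 2 ^ s`) at which it
takes the value `t`. -/
noncomputable def toothPoint (N : ℕ) (u t : ℝ) : ℝ :=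
  (toothIndex N u + flipOdd (toothIndex N u) t) / N

lemma toothIndex_lt {N : ℕ} (hN : 0 < N) (u : ℝ) : toothIndex N u < N := by
  unfold toothIndex; omega

lemma toothIndex_eq_of_mem_Ico {N j : ℕ} (hj : j < N) {u : ℝ}
    (hu : u ∈ Ico (j / N : ℝ) ((j + 1) / N)) : toothIndex N u = j := by
  have hN : (0 : ℝ) < N := by exact_mod_cast j.zero_le.trans_lt hj
  have h₁ := (div_le_iff₀ hN).1 hu.1
  have h₂ := (lt_div_iff₀ hN).1 hu.2
  have hfloor : ⌊(N : ℝ) * u⌋₊ = j := by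
    rw [Nat.floor_eq_iff (by linarith [j.cast_nonneg (α := ℝ)])]
    constructor <;> linarith
  unfold toothIndex; omega

lemma mem_Icc_toothIndex {N : ℕ} (hN : 0 < N) {u : ℝ} (hu : u ∈ Icc (0 : ℝ) 1) :
    u ∈ Icc (toothIndex N u / N : ℝ) ((toothIndex N u + 1) / N) := by
  have hN' : (0 : ℝ) < N := by exact_mod_cast hN
  rw [mem_Icc, div_le_iff₀ hN', le_div_iff₀ hN']
  constructor
  · calc (toothIndex N u : ℝ) ≤ ⌊(N : ℝ) * u⌋₊ := by exact_mod_cast min_le_left _ _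
      _ ≤ N * u := Nat.floor_le (mul_nonneg hN'.le hu.1)
      _ = u * N := mul_comm _ _
  · rcases le_total ⌊(N : ℝ) * u⌋₊ (N - 1) with h | h
    · rw [toothIndex, min_eq_left h]; linarith [Nat.lt_floor_add_one ((N : ℝ) * u)]
    · rw [toothIndex, min_eq_right h, Nat.cast_sub hN]; push_cast; nlinarith [hu.2]

lemma toothPoint_mem_Icc (N : ℕ) (u : ℝ) {t : ℝ} (ht : t ∈ Icc (0 : ℝ) 1) :
    toothPoint N u t ∈ Icc (toothIndex N u / N : ℝ) ((toothIndex N u + 1) / N) := by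
  have h := flipOdd_mem_Icc (toothIndex N u) ht
  exact ⟨by unfold toothPoint; gcongr; linarith [h.1], by unfold toothPoint; gcongr; exact h.2⟩

lemma abs_toothPoint_sub_le {N : ℕ} (hN : 0 < N) {u t : ℝ} (hu : u ∈ Icc (0 : ℝ) 1)
    (ht : t ∈ Icc (0 : ℝ) 1) : |toothPoint N u t - u| ≤ 1 / N := by
  have h := Real.dist_le_of_mem_Icc (toothPoint_mem_Icc N u ht) (mem_Icc_toothIndex hN hu)
  rw [Real.dist_eq] at h
  convert h using 1
  ring

lemma sawIter_toothPoint (s : ℕ) (u : ℝ) {t : ℝ} (ht : t ∈ Icc (0 : ℝ) 1) :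
    sawIter s (toothPoint (2 ^ s) u t) = t := by
  rw [toothPoint, Nat.cast_pow, Nat.cast_ofNat,
    sawIter_div_two_pow s (toothIndex_lt (by positivity) u) (flipOdd_mem_Icc _ ht),
    flipOdd_flipOdd]

lemma measurable_toothPoint (N : ℕ) : Measurable fun p : ℝ × ℝ => toothPoint N p.1 p.2 := by
  have hidx : Measurable fun p : ℝ × ℝ => toothIndex N p.1 :=
    ((Nat.measurable_floor.comp (measurable_const_mul _)).min measurable_const).comp
      measurable_fst
  unfold toothPoint flipOdd
  refine (measurable_from_nat.comp hidx |>.add ?_).div_const _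
  exact Measurable.ite (hidx (MeasurableSet.of_discrete (s := {k : ℕ | Even k})))
    measurable_snd (measurable_const.sub measurable_snd)

namespace MeasureTheory

lemma Measure.finsetSum_prod {ι α β : Type*} [MeasurableSpace α] [MeasurableSpace β]
    (s : Finset ι) (μ : ι → Measure α) (ν : Measure β) [SFinite ν] :
    (∑ i ∈ s, μ i).prod ν = ∑ i ∈ s, (μ i).prod ν := by
  rw [← Measure.sum_coe_finset, Measure.prod_sum_left]
  exact Measure.sum_coe_finset s fun i => (μ i).prod ν

lemma withDensity_finsetSum {ι α : Type*} [MeasurableSpace α] (μ : Measure α) (s : Finset ι)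
    {f : ι → α → ℝ≥0∞} (hf : ∀ i, Measurable (f i)) :
    μ.withDensity (∑ i ∈ s, f i) = ∑ i ∈ s, μ.withDensity (f i) := by
  classical
  induction s using Finset.induction with
  | empty => simp
  | insert i s hi ih =>
    rw [Finset.sum_insert hi, Finset.sum_insert hi, withDensity_add_left (hf i), ih]

end MeasureTheory

lemma MeasurableEquiv.withDensity_map {α β : Type*} [MeasurableSpace α] [MeasurableSpace β]
    (e : α ≃ᵐ β) (μ : Measure α) (f : β → ℝ≥0∞) :
    (μ.map e).withDensity f = (μ.withDensity (f ∘ e)).map e := by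
  ext s hs
  rw [withDensity_apply _ hs, Measure.map_apply e.measurable hs,
    withDensity_apply _ (e.measurable hs), e.restrict_map, lintegral_map_equiv]
  rfl

lemma restrict_Icc_eq_sum_restrict_Icc {μ : Measure ℝ} [NullSingletonClass μ] {b : ℕ → ℝ}
    {m : ℕ} (hb : MonotoneOn b (Iic m)) :
    μ.restrict (Icc (b 0) (b m)) = ∑ i ∈ Finset.range m, μ.restrict (Icc (b i) (b (i + 1))) := by
  induction m with
  | zero => simp
  | succ m ih =>
    have hb' : MonotoneOn b (Iic m) := hb.mono (Iic_subset_Iic.2 m.le_succ)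
    have h₀ : b 0 ≤ b m := hb' (Nat.zero_le m) (le_refl m) (Nat.zero_le m)
    have h₁ : b m ≤ b (m + 1) := hb m.le_succ (le_refl (m + 1)) m.le_succ
    rw [Finset.sum_range_succ, ← ih hb', ← Icc_union_Icc_eq_Icc h₀ h₁,
      Measure.restrict_union₀ _ measurableSet_Icc.nullMeasurableSet]
    exact measure_mono_null (fun x hx => le_antisymm hx.1.2 hx.2.1) (measure_singleton (b m))

lemma restrict_Icc_zero_one_eq_sum {N : ℕ} (hN : 0 < N) :
    𝕌 = ∑ j ∈ Finset.range N, volume.restrict (Icc (j / N : ℝ) ((j + 1) / N)) := by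
  have hmono : Monotone fun j : ℕ => (j / N : ℝ) := fun i j hij =>
    div_le_div_of_nonneg_right (by exact_mod_cast hij) N.cast_nonneg
  have h := restrict_Icc_eq_sum_restrict_Icc (μ := volume) (hmono.monotoneOn (Iic N))
  simp only [Nat.cast_zero, zero_div, Nat.cast_succ,
    div_self (Nat.cast_ne_zero.2 hN.ne' : (N : ℝ) ≠ 0)] at h
  exact h

lemma map_restrict_uIcc_mul_add {a : ℝ} (ha : a ≠ 0) (c p q : ℝ) :
    (volume.restrict (uIcc p q)).map (fun x => x * a + c) =
      ENNReal.ofReal |a⁻¹| • volume.restrict (uIcc (p * a + c) (q * a + c)) := by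
  have he : MeasurableEmbedding (fun x : ℝ => x * a + c) :=
    ((Homeomorph.mulRight₀ a ha).trans (Homeomorph.addRight c)).measurableEmbedding
  have himage : (fun x => x * a + c) '' uIcc p q = uIcc (p * a + c) (q * a + c) := by
    rw [← image_image (· + c) (· * a), image_mul_const_uIcc, image_add_const_uIcc]
  have hvol : volume.map (fun x : ℝ => x * a + c) = ENNReal.ofReal |a⁻¹| • volume := by
    rw [show (fun x : ℝ => x * a + c) = (· + c) ∘ (· * a) from rfl,
      ← Measure.map_map (measurable_add_const c) (measurable_mul_const a),
      Real.map_volume_mul_right ha, Measure.map_smul, map_add_right_eq_self]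
  conv_lhs => rw [← he.injective.preimage_image (uIcc p q)]
  rw [← he.restrict_map, hvol, Measure.restrict_smul, himage]

lemma map_restrict_Icc_zero_one_mul_add {a : ℝ} (ha : a ≠ 0) (c : ℝ) :
    (𝕌).map (fun x => x * a + c) = ENNReal.ofReal |a⁻¹| • volume.restrict (uIcc c (a + c)) := by
  simpa [uIcc_of_le zero_le_one] using map_restrict_uIcc_mul_add ha c 0 1

lemma map_restrict_Icc_zero_one_tooth {N j : ℕ} (hN : 0 < N) :
    (𝕌).map (fun t => (j + flipOdd j t) / N) =
      ENNReal.ofReal N • volume.restrict (Icc (j / N : ℝ) ((j + 1) / N)) := by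
  have hN' : (0 : ℝ) < N := by exact_mod_cast hN
  by_cases hj : Even j
  · have hf : (fun t => (j + flipOdd j t) / N) = fun t => t * (N : ℝ)⁻¹ + j / N := by
      funext t; rw [flipOdd, if_pos hj]; ring
    rw [hf, map_restrict_Icc_zero_one_mul_add (by positivity), inv_inv, abs_of_pos hN',
      uIcc_of_le (by linarith [inv_pos.2 hN'])]
    congr 3; ring
  · have hf : (fun t => (j + flipOdd j t) / N) = fun t => t * -(N : ℝ)⁻¹ + (j + 1) / N := by
      funext t; rw [flipOdd, if_neg hj]; ring
    rw [hf, map_restrict_Icc_zero_one_mul_add (by simp [hN'.ne']), inv_neg, inv_inv, abs_neg,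
      abs_of_pos hN', uIcc_of_ge (by linarith [inv_pos.2 hN'])]
    congr 3; ring

/- Split the `u`-axis into the `N` cells; over the `j`-th cell `toothPoint N u t` no longer
depends on `u`, and the affine tooth map spreads the uniform `t` over that same cell. -/
theorem map_toothPoint {N : ℕ} (hN : 0 < N) :
    ((𝕌).prod 𝕌).map (fun p => toothPoint N p.1 p.2) = 𝕌 := by
  have hN' : (0 : ℝ) < N := by exact_mod_cast hN
  nth_rw 1 [restrict_Icc_zero_one_eq_sum hN]
  rw [Measure.finsetSum_prod, Measure.map_finset_sum (measurable_toothPoint N).aemeasurable]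
  conv_rhs => rw [restrict_Icc_zero_one_eq_sum hN]
  refine Finset.sum_congr rfl fun j hj => ?_
  set cell := volume.restrict (Icc (j / N : ℝ) ((j + 1) / N)) with hcell
  have htooth : (cell.prod 𝕌).map (fun p => toothPoint N p.1 p.2) =
      (cell.prod 𝕌).map ((fun t => (j + flipOdd j t) / N) ∘ Prod.snd) := by
    refine Measure.map_congr ?_
    rw [hcell, ← Measure.restrict_congr_set Ico_ae_eq_Icc, Measure.prod_restrict]
    filter_upwards [ae_restrict_mem (measurableSet_Ico.prod measurableSet_Icc)] with p hp
    simp only [toothPoint, Function.comp, toothIndex_eq_of_mem_Ico (Finset.mem_range.1 hj) hp.1]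
  have hφ : Measurable fun t : ℝ => (j + flipOdd j t) / N := by
    unfold flipOdd
    exact ((Measurable.ite (by simp) measurable_id (by fun_prop)).const_add _).div_const _
  rw [htooth, ← Measure.map_map hφ measurable_snd, Measure.map_snd_prod, Measure.map_smul,
    map_restrict_Icc_zero_one_tooth hN, smul_smul, hcell, Measure.restrict_apply_univ,
    Real.volume_Icc, ← sub_div, add_sub_cancel_left, ← ENNReal.ofReal_mul (by positivity),
    one_div_mul_cancel hN'.ne', ENNReal.ofReal_one, one_smul]

noncomputable def histDensity (n : ℕ) (v : ℕ → ℝ) (x : ℝ) : ℝ :=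
  ∑ k ∈ Finset.range n, v k * (Ico ((k : ℝ) / n) (((k : ℝ) + 1) / n)).indicator (fun _ => 1) x

lemma measurable_histDensity (n : ℕ) (v : ℕ → ℝ) : Measurable (histDensity n v) :=
  Finset.measurable_sum _ fun _ _ =>
    measurable_const.mul (measurable_const.indicator measurableSet_Ico)

lemma histDensity_nonneg {n : ℕ} {v : ℕ → ℝ} (hv : ∀ k < n, 0 ≤ v k) (x : ℝ) :
    0 ≤ histDensity n v x :=
  Finset.sum_nonneg fun k hk =>
    mul_nonneg (hv k (Finset.mem_range.1 hk)) (indicator_nonneg (fun _ _ => zero_le_one) _)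

lemma withDensity_histDensity {n : ℕ} {v : ℕ → ℝ} (hv : ∀ k < n, 0 ≤ v k) :
    volume.withDensity (fun x => ENNReal.ofReal (histDensity n v x)) =
      ∑ k ∈ Finset.range n,
        ENNReal.ofReal (v k) • volume.restrict (Icc (k / n : ℝ) ((k + 1) / n)) := by
  have hpt : (fun x => ENNReal.ofReal (histDensity n v x)) = ∑ k ∈ Finset.range n,
      (Ico ((k : ℝ) / n) (((k : ℝ) + 1) / n)).indicator (fun _ => ENNReal.ofReal (v k)) := by
    funext x
    rw [histDensity, ENNReal.ofReal_sum_of_nonneg, Finset.sum_apply]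
    · refine Finset.sum_congr rfl fun k _ => ?_
      by_cases hx : x ∈ Ico ((k : ℝ) / n) (((k : ℝ) + 1) / n) <;> simp [hx]
    · exact fun k hk =>
        mul_nonneg (hv k (Finset.mem_range.1 hk)) (indicator_nonneg (fun _ _ => zero_le_one) _)
  rw [hpt, withDensity_finsetSum _ _ fun _ => measurable_const.indicator measurableSet_Ico]
  refine Finset.sum_congr rfl fun k _ => ?_
  rw [withDensity_indicator measurableSet_Ico, withDensity_const,
    Measure.restrict_congr_set Ico_ae_eq_Icc]

lemma withDensity_histDensity_one {n : ℕ} (hn : 0 < n) :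
    volume.withDensity (fun x => ENNReal.ofReal (histDensity n (fun _ => 1) x)) = 𝕌 := by
  rw [withDensity_histDensity fun _ _ => zero_le_one, restrict_Icc_zero_one_eq_sum hn]
  simp

noncomputable def plfKnot (n : ℕ) (v : ℕ → ℝ) (i : ℕ) : ℝ :=
  1 / n * ∑ j ∈ Finset.range i, v j

noncomputable def plfCoeff (v : ℕ → ℝ) (i : ℕ) : ℝ :=
  if i = 0 then 1 / v 0 else 1 / v i - 1 / v (i - 1)

lemma plf_eq_sum (n : ℕ) (v : ℕ → ℝ) (x : ℝ) :
    plf n v x = ∑ i ∈ Finset.range n, plfCoeff v i * max 0 (x - plfKnot n v i) := rfl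

lemma continuous_plf (n : ℕ) (v : ℕ → ℝ) : Continuous (plf n v) := by
  unfold plf; fun_prop

lemma plfKnot_zero (n : ℕ) (v : ℕ → ℝ) : plfKnot n v 0 = 0 := by
  simp [plfKnot]

lemma plfKnot_succ (n : ℕ) (v : ℕ → ℝ) (i : ℕ) :
    plfKnot n v (i + 1) = plfKnot n v i + v i / n := by
  simp only [plfKnot, Finset.sum_range_succ]; ring

lemma monotoneOn_plfKnot {n : ℕ} {v : ℕ → ℝ} (hv : ∀ k < n, 0 ≤ v k) :
    MonotoneOn (plfKnot n v) (Iic n) := fun p _ q hq hpq =>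
  mul_le_mul_of_nonneg_left (Finset.sum_le_sum_of_subset_of_nonneg
    (Finset.range_subset_range.2 hpq) fun k hk _ => hv k ((Finset.mem_range.1 hk).trans_le hq))
    (by positivity)

/- The coefficients telescope: past the `i`-th knot the slope of `plf` is `1 / v i`. -/
lemma sum_plfCoeff_mul {n i : ℕ} {v : ℕ → ℝ} (hv : ∀ k ≤ i, v k ≠ 0) (x : ℝ) :
    ∑ k ∈ Finset.range (i + 1), plfCoeff v k * (x - plfKnot n v k) =
      i / n + (x - plfKnot n v i) / v i := by
  induction i with
  | zero => simp [plfCoeff, plfKnot_zero, div_eq_inv_mul]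
  | succ i ih =>
    have hi := hv i i.le_succ
    have hi' := hv (i + 1) le_rfl
    rw [Finset.sum_range_succ, ih fun k hk => hv k (hk.trans i.le_succ), plfKnot_succ,
      plfCoeff, if_neg i.succ_ne_zero, Nat.add_sub_cancel]
    push_cast
    field_simp
    ring

lemma plf_eq_of_mem_Icc {n i : ℕ} {v : ℕ → ℝ} (hv : ∀ k < n, 0 < v k) (hi : i < n) {x : ℝ}
    (hx : x ∈ Icc (plfKnot n v i) (plfKnot n v (i + 1))) :
    plf n v x = i / n + (x - plfKnot n v i) / v i := by
  have hmono := monotoneOn_plfKnot fun k hk => (hv k hk).le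
  rw [plf_eq_sum, ← Finset.sum_range_add_sum_Ico _ (Nat.succ_le_of_lt hi),
    ← sum_plfCoeff_mul (fun k hk => (hv k (by omega)).ne') x]
  have htail : ∑ k ∈ Finset.Ico (i + 1) n, plfCoeff v k * max 0 (x - plfKnot n v k) = 0 :=
    Finset.sum_eq_zero fun k hk => by
      have hk := Finset.mem_Ico.1 hk
      have := hmono (show i + 1 ∈ Iic n from hi) (show k ∈ Iic n from hk.2.le) hk.1
      rw [max_eq_left (by linarith [hx.2]), mul_zero]
  rw [htail, add_zero]
  refine Finset.sum_congr rfl fun k hk => ?_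
  have hk := Finset.mem_range.1 hk
  have := hmono (show k ∈ Iic n by simp only [mem_Iic]; omega) (show i ∈ Iic n from hi.le)
    (by omega)
  rw [max_eq_right (by linarith [hx.1])]

lemma map_restrict_Icc_plfKnot {n i : ℕ} {v : ℕ → ℝ} (hv : ∀ k < n, 0 < v k) (hi : i < n) :
    (volume.restrict (Icc (plfKnot n v i) (plfKnot n v (i + 1)))).map (plf n v) =
      ENNReal.ofReal (v i) • volume.restrict (Icc (i / n : ℝ) ((i + 1) / n)) := by
  have hvi := hv i hi
  set c : ℝ := i / n - plfKnot n v i / v i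
  have hcongr : (volume.restrict (Icc (plfKnot n v i) (plfKnot n v (i + 1)))).map (plf n v) =
      (volume.restrict (Icc (plfKnot n v i) (plfKnot n v (i + 1)))).map
        (fun x => x * (v i)⁻¹ + c) := by
    refine Measure.map_congr ?_
    filter_upwards [ae_restrict_mem measurableSet_Icc] with x hx
    rw [plf_eq_of_mem_Icc hv hi hx]; ring
  have hle : plfKnot n v i ≤ plfKnot n v (i + 1) := by
    rw [plfKnot_succ]; linarith [div_nonneg hvi.le n.cast_nonneg]
  have e₁ : plfKnot n v i * (v i)⁻¹ + c = i / n := by simp only [c]; field_simp; ring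
  have e₂ : plfKnot n v (i + 1) * (v i)⁻¹ + c = (i + 1) / n := by
    simp only [c, plfKnot_succ]; field_simp; ring
  rw [hcongr, ← uIcc_of_le hle, map_restrict_uIcc_mul_add (inv_ne_zero hvi.ne'), inv_inv,
    abs_of_pos hvi, e₁, e₂, uIcc_of_le (by gcongr; linarith)]

theorem map_plf {n : ℕ} (hn : 0 < n) {v : ℕ → ℝ} (hv : ∀ k < n, 0 < v k)
    (hsum : ∑ k ∈ Finset.range n, v k = n) :
    (𝕌).map (plf n v) = volume.withDensity (fun x => ENNReal.ofReal (histDensity n v x)) := by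
  have hU := restrict_Icc_eq_sum_restrict_Icc (μ := volume)
    (monotoneOn_plfKnot fun k hk => (hv k hk).le)
  rw [plfKnot_zero, plfKnot, hsum, one_div_mul_cancel (by positivity)] at hU
  rw [hU, Measure.map_finset_sum (continuous_plf n v).measurable.aemeasurable,
    withDensity_histDensity fun k hk => (hv k hk).le]
  exact Finset.sum_congr rfl fun i hi => map_restrict_Icc_plfKnot hv (Finset.mem_range.1 hi)

noncomputable def prodEquivEuclidean : (ℝ × ℝ) ≃ᵐ EuclideanSpace ℝ (Fin 2) :=
  MeasurableEquiv.finTwoArrow.symm.trans (MeasurableEquiv.toLp 2 (Fin 2 → ℝ))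

lemma prodEquivEuclidean_apply (p : ℝ × ℝ) :
    prodEquivEuclidean p = WithLp.toLp 2 ![p.1, p.2] := rfl

lemma measurePreserving_prodEquivEuclidean :
    MeasurePreserving prodEquivEuclidean (volume.prod volume) volume := by
  rw [← Measure.volume_eq_prod]
  exact (PiLp.volume_preserving_toLp (Fin 2)).comp
    ((volume_preserving_finTwoArrow ℝ).symm MeasurableEquiv.finTwoArrow)

lemma norm_toLp_sub_toLp_of_snd_eq (a c b : ℝ) :
    ‖(WithLp.toLp 2 ![a, b] : EuclideanSpace ℝ (Fin 2)) - WithLp.toLp 2 ![c, b]‖ = |a - c| := by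
  rw [EuclideanSpace.norm_eq]
  simp [Fin.sum_univ_two, Real.sqrt_sq_eq_abs]

lemma histPdf2_const_fst (n : ℕ) (w : ℕ → ℝ) (p : ℝ × ℝ) :
    histPdf2 n (fun _ k => w k) (prodEquivEuclidean p) =
      histDensity n (fun _ => 1) p.1 * histDensity n w p.2 := by
  rw [histDensity, histDensity, Finset.sum_mul_sum]
  refine Finset.sum_congr rfl fun _ _ => Finset.sum_congr rfl fun _ _ => ?_
  simp only [prodEquivEuclidean_apply, PiLp.toLp_apply, Matrix.cons_val_zero,
    Matrix.cons_val_one]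
  ring

theorem withDensity_histPdf2_const_fst {n : ℕ} (hn : 0 < n) (w : ℕ → ℝ) :
    volume.withDensity (fun y => ENNReal.ofReal (histPdf2 n (fun _ k => w k) y)) =
      ((𝕌).prod (volume.withDensity fun x => ENNReal.ofReal (histDensity n w x))).map
        prodEquivEuclidean := by
  have hmeas (v : ℕ → ℝ) : Measurable fun x => ENNReal.ofReal (histDensity n v x) :=
    ENNReal.measurable_ofReal.comp (measurable_histDensity n v)
  rw [← measurePreserving_prodEquivEuclidean.map_eq, MeasurableEquiv.withDensity_map,
    ← withDensity_histDensity_one hn, prod_withDensity (hmeas _) (hmeas w)]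
  congr 2
  funext p
  rw [Function.comp_apply, histPdf2_const_fst,
    ENNReal.ofReal_mul (histDensity_nonneg (fun _ _ => zero_le_one) _)]

theorem withDensity_histPdf2_eq_map_plf {n : ℕ} (hn : 0 < n) {w : ℕ → ℝ}
    (hw : ∀ k < n, 0 < w k) (hsum : ∑ k ∈ Finset.range n, w k = n) :
    volume.withDensity (fun y => ENNReal.ofReal (histPdf2 n (fun _ k => w k) y)) =
      ((𝕌).prod 𝕌).map fun p => prodEquivEuclidean (p.1, plf n w p.2) := by
  have hplf : Measurable (plf n w) := (continuous_plf n w).measurable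
  have hprod : (𝕌).prod ((𝕌).map (plf n w)) = ((𝕌).prod 𝕌).map (Prod.map id (plf n w)) := by
    rw [← Measure.map_prod_map _ _ measurable_id hplf, Measure.map_id]
  rw [withDensity_histPdf2_const_fst hn, ← map_plf hn hw hsum, hprod,
    Measure.map_map prodEquivEuclidean.measurable (measurable_id.prodMap hplf)]
  rfl

theorem wassersteinDist_map_le {α E : Type*} [MeasurableSpace α] [NormedAddCommGroup E]
    [MeasurableSpace E] [BorelSpace E] [SecondCountableTopology E] {ρ : Measure α}
    [IsProbabilityMeasure ρ] {φ ψ : α → E} (hφ : Measurable φ) (hψ : Measurable ψ) {c : ℝ}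
    (hc : ∀ᵐ a ∂ρ, ‖φ a - ψ a‖ ≤ c) :
    wassersteinDist (ρ.map φ) (ρ.map ψ) ≤ c := by
  have hπ : Measurable fun a => (φ a, ψ a) := hφ.prodMk hψ
  let π : {π : Measure (E × E) // π.map Prod.fst = ρ.map φ ∧ π.map Prod.snd = ρ.map ψ} :=
    ⟨ρ.map fun a => (φ a, ψ a), by rw [Measure.map_map measurable_fst hπ]; rfl,
      by rw [Measure.map_map measurable_snd hπ]; rfl⟩
  have hbdd : BddBelow (range fun π : {π : Measure (E × E) //
      π.map Prod.fst = ρ.map φ ∧ π.map Prod.snd = ρ.map ψ} =>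
      ∫ p, ‖p.1 - p.2‖ ∂(π : Measure (E × E))) :=
    ⟨0, by rintro _ ⟨π, rfl⟩; exact integral_nonneg fun _ => norm_nonneg _⟩
  calc wassersteinDist (ρ.map φ) (ρ.map ψ) ≤ ∫ p, ‖p.1 - p.2‖ ∂(π : Measure (E × E)) :=
        ciInf_le hbdd π
    _ = ∫ a, ‖φ a - ψ a‖ ∂ρ :=
        integral_map hπ.aemeasurable (continuous_fst.sub continuous_snd).norm.aestronglyMeasurable
    _ ≤ ∫ _, c ∂ρ :=
        integral_mono_of_nonneg (ae_of_all _ fun _ => norm_nonneg _) (integrable_const c) hc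
    _ = c := by simp

lemma uniformOnIcc_zero_one : uniformOnIcc 0 1 = 𝕌 := by
  simp [uniformOnIcc]

theorem linewise_transport_general (n s : ℕ) (hn : 0 < n)
    (w : ℕ → ℝ) (hw : ∀ k < n, 0 < w k) (hsum : ∑ k ∈ Finset.range n, w k = (n:ℝ)) :
    wassersteinDist
      (Measure.map (fun x : ℝ =>
          (show EuclideanSpace ℝ (Fin 2) from WithLp.toLp 2 ![x, plf n w (sawIter s x)]))
        (uniformOnIcc 0 1))
      (volume.withDensity fun y => ENNReal.ofReal (histPdf2 n (fun _ k₂ => w k₂) y))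
      ≤ 2 * Real.sqrt 2 / 2^s := by
  set M : ℝ → EuclideanSpace ℝ (Fin 2) := fun x => WithLp.toLp 2 ![x, plf n w (sawIter s x)]
  have hplf : Measurable (plf n w) := (continuous_plf n w).measurable
  have hM : Measurable M := prodEquivEuclidean.measurable.comp
    (measurable_id.prodMk (hplf.comp (measurable_sawIter s)))
  have hcost : ∀ᵐ p ∂(𝕌).prod 𝕌,
      ‖M (toothPoint (2 ^ s) p.1 p.2) - prodEquivEuclidean (p.1, plf n w p.2)‖ ≤ 1 / 2 ^ s := by
    rw [Measure.prod_restrict]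
    filter_upwards [ae_restrict_mem (measurableSet_Icc.prod measurableSet_Icc)] with p hp
    simpa [M, prodEquivEuclidean_apply, sawIter_toothPoint s p.1 hp.2,
      norm_toLp_sub_toLp_of_snd_eq] using abs_toothPoint_sub_le (pow_pos two_pos s) hp.1 hp.2
  have : IsProbabilityMeasure 𝕌 := ⟨by simp⟩
  rw [uniformOnIcc_zero_one, ← map_toothPoint (N := 2 ^ s) (by positivity),
    Measure.map_map hM (measurable_toothPoint _), withDensity_histPdf2_eq_map_plf hn hw hsum]
  calc _ ≤ 1 / 2 ^ s := wassersteinDist_map_le (hM.comp (measurable_toothPoint _))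
        (prodEquivEuclidean.measurable.comp (measurable_fst.prodMk (hplf.comp measurable_snd)))
        hcost
    _ ≤ 2 * Real.sqrt 2 / 2 ^ s := by gcongr; nlinarith [Real.one_lt_sqrt_two]

/-- Let `p_{X,Y}` be a two-dimensional histogram density of resolution `n`
whose weights `w_{k₁,k₂} = w_{k₂}` depend only on the second index, and let `f = plf n w` be
the explicit piecewise linear function generating the corresponding one-dimensional marginal
(with weights `w_k`). Then the transport map `M(x) = (x, f(g_s(x)))` satisfies
`W(M # U, p_{X,Y}) ≤ 2√2/2^s`. -/
theorem linewise_transport (n s : ℕ) (hn : 0 < n) (hs : 1 ≤ s)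
    (w : ℕ → ℝ) (hw : ∀ k < n, 0 < w k) (hsum : ∑ k ∈ Finset.range n, w k = (n:ℝ)) :
    wassersteinDist
      (Measure.map (fun x : ℝ =>
          (show EuclideanSpace ℝ (Fin 2) from WithLp.toLp 2 ![x, plf n w (sawIter s x)]))
        (uniformOnIcc 0 1))
      (volume.withDensity fun y => ENNReal.ofReal (histPdf2 n (fun _ k₂ => w k₂) y))
      ≤ 2 * Real.sqrt 2 / 2^s :=
  linewise_transport_general n s hn w hw hsum
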